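/- Every finite digraph whose missing graph is a path with 3 edges (P₃) has a vertex v with the second neighborhood property, i.e. |N⁺(v)| ≤ |N⁺⁺(v)|. -/

import Mathlib

/-- First out-neighborhood of `v` in the digraph with arc relation `E`. -/
def Nplus {V : Type*} (E : V → V → Prop) (v : V) : Set V := {u | E v u}

/-- Second out-neighborhood: vertices at directed distance exactly 2 from `v`. -/
def Nplusplus {V : Type*} (E : V → V → Prop) (v : V) : Set V :=
  {u | u ∉ Nplus E v ∧ u ≠ v ∧ ∃ w ∈ Nplus E v, E w u}

/-- `v` has the second neighborhood property. -/
def HasSNP {V : Type*} (E : V → V → Prop) (v : V) : Prop :=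
  (Nplus E v).ncard ≤ (Nplusplus E v).ncard

/-- `{x, y}` is a missing edge of the digraph `E`. -/
def IsMissingEdge {V : Type*} (E : V → V → Prop) (x y : V) : Prop :=
  x ≠ y ∧ ¬ E x y ∧ ¬ E y x

/-- The ordered missing edge `(x₁, y₁)` loses to the ordered missing edge `(x₂, y₂)`. -/
def OLoses {V : Type*} (E : V → V → Prop) (x₁ y₁ x₂ y₂ : V) : Prop :=
  E x₁ x₂ ∧ y₂ ∉ Nplus E x₁ ∪ Nplusplus E x₁ ∧
  E y₁ y₂ ∧ x₂ ∉ Nplus E y₁ ∪ Nplusplus E y₁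

/-- The missing edge `{a, b}` loses to the missing edge `{c, d}`:
some ordering of the endpoints satisfies the ordered losing relation. -/
def Loses {V : Type*} (E : V → V → Prop) (a b c d : V) : Prop :=
  OLoses E a b c d ∨ OLoses E a b d c ∨ OLoses E b a c d ∨ OLoses E b a d c

/-- The missing edge `{a, b}` is good. -/
def Good {V : Type*} (E : V → V → Prop) (a b : V) : Prop :=
  (∀ v, v ≠ a → v ≠ b → E v a → b ∈ Nplus E v ∪ Nplusplus E v) ∨
  (∀ v, v ≠ a → v ≠ b → E v b → a ∈ Nplus E v ∪ Nplusplus E v)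

/-- Arc of the dependency digraph Δ: the missing edge `e` loses to the missing edge `f`. -/
def DeltaArc {V : Type*} (E : V → V → Prop) (e f : Sym2 V) : Prop :=
  ∃ a b c d : V, e = s(a, b) ∧ f = s(c, d) ∧
    IsMissingEdge E a b ∧ IsMissingEdge E c d ∧ OLoses E a b c d

/-!
Orient every missing edge other than one pair `{a, b}` so that each added arc `v → u` lands
within distance two of every in-neighbour of `v`. For a missing `P₃` this is possible with
`{a, b}` an end edge: if the middle edge or both end edges admitted no such orientation, the
witnesses would form a further missing edge.

This gives a tournament minus the pair `{a, b}`; let `f` be the last vertex of a median order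
of it. Every final segment of the order contains at least as many vertices of `N⁺⁺(f)` as of
`N⁺(f)`. In a shortest violating segment, moving `f` to its front shows that the segment has a
vertex outside `N⁺(f) ∪ N⁺⁺(f)`. Moving the first such vertex `u` forward over the part `W`
before it keeps the order median: no vertex of `N⁺(f)` beats `u`, and `u` beats all of them in
`W` except possibly the partner of `u` in `{a, b}`. Deleting `u` from the violating segment
then gives a shorter one.
-/

open Classical

namespace List

variable {α : Type*}

theorem countP_le_countP_add_countP {p q r : α → Bool} {l : List α}
    (h : ∀ x ∈ l, p x → q x ∨ r x) : l.countP p ≤ l.countP q + l.countP r := by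
  induction l with
  | nil => simp
  | cons x l ih =>
    have := ih fun y hy => h y (mem_cons_of_mem x hy)
    have hx := h x mem_cons_self
    simp only [countP_cons]
    grind

theorem Nodup.countP_mk_eq_le_one {l : List α} (hl : l.Nodup) (u : α) (e : Sym2 α) :
    l.countP (fun v => s(v, u) = e) ≤ 1 := by
  by_cases he : ∃ v, s(v, u) = e
  · obtain ⟨v₀, rfl⟩ := he
    calc l.countP (fun v => s(v, u) = s(v₀, u)) ≤ l.count v₀ :=
          countP_mono_left fun v _ hv => by simpa using Sym2.congr_left.mp (of_decide_eq_true hv)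
      _ ≤ 1 := nodup_iff_count_le_one.mp hl v₀
  · push Not at he
    simp [he]

theorem countP_eq_ncard {l : List α} (hl : l.Nodup) (hall : ∀ v, v ∈ l) (s : Set α) :
    l.countP (· ∈ s) = s.ncard := by
  rw [countP_eq_length_filter, ← toFinset_card_of_nodup (hl.filter _), ← Set.ncard_coe_finset]
  congr
  ext v
  simp [hall]

theorem perm_append_cons_append (X Y Z : List α) (u : α) :
    (X ++ u :: (Y ++ Z)).Perm (X ++ Y ++ u :: Z) := by
  rw [append_assoc]
  exact perm_middle.symm.append_left X

end List

section MedianOrder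

variable {V : Type*}

noncomputable def forwardArcs (T : V → V → Prop) : List V → ℕ
  | [] => 0
  | x :: l => l.countP (T x ·) + forwardArcs T l

def IsMedianOrder (T : V → V → Prop) (l : List V) : Prop :=
  ∀ l', l'.Perm l → forwardArcs T l' ≤ forwardArcs T l

theorem exists_perm_isMedianOrder (T : V → V → Prop) (l₀ : List V) :
    ∃ l, l.Perm l₀ ∧ IsMedianOrder T l := by
  obtain ⟨l, hl, hmax⟩ := l₀.permutations.toFinset.exists_max_image (forwardArcs T)
    ⟨l₀, by simp⟩
  simp only [List.mem_toFinset, List.mem_permutations] at hl hmax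
  exact ⟨l, hl, fun l' hl' => hmax l' (hl'.trans hl)⟩

theorem forwardArcs_append_add_of_perm (T : V → V → Prop) (X : List V) {l l' : List V}
    (h : l.Perm l') :
    forwardArcs T (X ++ l) + forwardArcs T l' = forwardArcs T (X ++ l') + forwardArcs T l := by
  induction X with
  | nil => simp [add_comm]
  | cons x X ih =>
    simp only [List.cons_append, forwardArcs, List.countP_append, h.countP_eq]
    omega

theorem forwardArcs_append_cons_add (T : V → V → Prop) (u : V) (Y Z : List V) :
    forwardArcs T (Y ++ u :: Z) + Y.countP (T u ·) =
      forwardArcs T (u :: (Y ++ Z)) + Y.countP (T · u) := by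
  induction Y with
  | nil => simp
  | cons y Y ih =>
    simp only [forwardArcs, List.cons_append, List.countP_cons, List.countP_append] at *
    split_ifs <;> omega

theorem forwardArcs_move_add (T : V → V → Prop) (X Y Z : List V) (u : V) :
    forwardArcs T (X ++ Y ++ u :: Z) + Y.countP (T u ·) =
      forwardArcs T (X ++ u :: (Y ++ Z)) + Y.countP (T · u) := by
  have := forwardArcs_append_add_of_perm T X (List.perm_middle (a := u) (l₁ := Y) (l₂ := Z))
  have := forwardArcs_append_cons_add T u Y Z
  rw [List.append_assoc]
  omega

variable {T : V → V → Prop} {X Y Z : List V} {u : V}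

theorem IsMedianOrder.countP_le (h : IsMedianOrder T (X ++ Y ++ u :: Z)) :
    Y.countP (T u ·) ≤ Y.countP (T · u) := by
  have := h _ (List.perm_append_cons_append X Y Z u)
  have := forwardArcs_move_add T X Y Z u
  omega

theorem IsMedianOrder.move (h : IsMedianOrder T (X ++ Y ++ u :: Z))
    (hu : Y.countP (T · u) ≤ Y.countP (T u ·)) : IsMedianOrder T (X ++ u :: (Y ++ Z)) := by
  intro l' hl'
  have := h l' (hl'.trans (List.perm_append_cons_append X Y Z u))
  have := forwardArcs_move_add T X Y Z u
  omega

end MedianOrder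

section GoodOrientation

variable {V : Type*} {E : V → V → Prop}

def IsGoodOrientation (E : V → V → Prop) (x y : V) : Prop :=
  ∀ v, v ≠ x → v ≠ y → E v x → y ∈ Nplus E v ∪ Nplusplus E v

theorem good_iff {x y : V} : Good E x y ↔ IsGoodOrientation E x y ∨ IsGoodOrientation E y x :=
  or_congr Iff.rfl (forall_congr' fun _ => forall_comm)

theorem good_comm {x y : V} : Good E x y ↔ Good E y x := by
  rw [good_iff, good_iff, or_comm]

theorem good_of_mk_eq {x y p q : V} (h : s(x, y) = s(p, q)) (hpq : Good E p q) : Good E x y := by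
  rcases Sym2.eq_iff.mp h with ⟨rfl, rfl⟩ | ⟨rfl, rfl⟩
  exacts [hpq, good_comm.mp hpq]

theorem mem_nplus_union_nplusplus_of_adj {g v u : V} (hgv : E g v) (hvu : E v u) (hug : u ≠ g) :
    u ∈ Nplus E g ∪ Nplusplus E g := by
  by_cases hgu : E g u
  · exact Or.inl hgu
  · exact Or.inr ⟨hgu, hug, v, hgv, hvu⟩

theorem exists_isMissingEdge_of_not_good {x y : V} (h : ¬ Good E x y) :
    ∃ v w, IsMissingEdge E v w ∧ E v x ∧ E w y ∧ v ≠ x ∧ v ≠ y ∧ w ≠ x ∧ w ≠ y := by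
  simp only [good_iff, IsGoodOrientation, not_or, not_forall] at h
  obtain ⟨⟨v, hvx, hvy, hvE, hv⟩, ⟨w, hwy, hwx, hwE, hw⟩⟩ := h
  refine ⟨v, w, ⟨?_, ?_, ?_⟩, hvE, hwE, hvx, hvy, hwx, hwy⟩
  · rintro rfl
    exact hv (Or.inl hwE)
  · exact fun hvw => hv (mem_nplus_union_nplusplus_of_adj hvw hwE hvy.symm)
  · exact fun hwv => hw (mem_nplus_union_nplusplus_of_adj hwv hvE hwx.symm)

end GoodOrientation

section GoodCompletion

variable {V : Type*}

structure IsGoodCompletion (E T : V → V → Prop) (a b : V) : Prop where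
  le : ∀ x y, E x y → T x y
  not_rev : ∀ x y, T x y → ¬ E y x
  total : ∀ x y, x ≠ y → s(x, y) ≠ s(a, b) → T x y ∨ T y x
  good : ∀ g v u, E g v → T v u → u ≠ g → u ∈ Nplus E g ∪ Nplusplus E g

variable {E T : V → V → Prop} {a b f : V}

theorem isGoodCompletion_of_forall_good (hasym : ∀ x y, E x y → ¬ E y x)
    (hgood : ∀ x y, IsMissingEdge E x y → s(x, y) ≠ s(a, b) → Good E x y) :
    IsGoodCompletion E (fun x y => E x y ∨ (IsMissingEdge E x y ∧ IsGoodOrientation E x y))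
      a b where
  le _ _ h := Or.inl h
  not_rev x y := by
    rintro (h | ⟨h, -⟩)
    exacts [hasym x y h, h.2.2]
  total x y hxy hab := by
    by_cases hE : E x y ∨ E y x
    · exact hE.imp Or.inl Or.inl
    · push Not at hE
      have hm : IsMissingEdge E x y := ⟨hxy, hE⟩
      exact (good_iff.mp (hgood x y hm hab)).imp (fun h => Or.inr ⟨hm, h⟩)
        (fun h => Or.inr ⟨⟨hxy.symm, hE.symm⟩, h⟩)
  good g v u hgv hvu hug := by
    rcases hvu with hvu | ⟨-, hvu⟩
    · exact mem_nplus_union_nplusplus_of_adj hgv hvu hug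
    · exact hvu g (fun h => hasym g g (h ▸ hgv) (h ▸ hgv)) hug.symm hgv

theorem IsGoodCompletion.irrefl (hC : IsGoodCompletion E T a b) (x : V) : ¬ E x x :=
  fun h => hC.not_rev x x (hC.le x x h) h

theorem IsGoodCompletion.exists_mem_not_mem_nplus_union {p M : List V}
    (hC : IsGoodCompletion E T a b) (hl : IsMedianOrder T (p ++ M ++ [f]))
    (hM : M.countP (· ∈ Nplusplus E f) < M.countP (· ∈ Nplus E f)) :
    ∃ u ∈ M, u ∉ Nplus E f ∪ Nplusplus E f := by
  by_contra! hM2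
  have hfeed := hl.countP_le
  have hK : M.countP (· ∈ Nplus E f) ≤ M.countP (T f ·) :=
    List.countP_mono_left fun v _ hv => by simpa using hC.le f v (of_decide_eq_true hv)
  have hS : M.countP (T · f) ≤ M.countP (· ∈ Nplusplus E f) := by
    refine List.countP_mono_left fun v hv hvf => ?_
    have hvK : v ∉ Nplus E f := hC.not_rev v f (by simpa using hvf)
    simpa [hvK] using hM2 v hv
  omega

theorem IsGoodCompletion.isMedianOrder_move {p W Z : List V} {u : V}
    (hC : IsGoodCompletion E T a b) (hl : IsMedianOrder T (p ++ W ++ u :: Z)) (hW : W.Nodup)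
    (hu : u ∉ Nplus E f ∪ Nplusplus E f) (huf : u ≠ f)
    (hWf : ∀ w ∈ W, w ∈ Nplus E f ∪ Nplusplus E f)
    (hlt : W.countP (· ∈ Nplusplus E f) < W.countP (· ∈ Nplus E f)) :
    IsMedianOrder T (p ++ u :: (W ++ Z)) := by
  have hKu : ∀ v ∈ Nplus E f, ¬ T v u := fun v hv hvu => hu (hC.good f v u hv hvu huf)
  have hin : W.countP (T · u) ≤ W.countP (· ∈ Nplusplus E f) := by
    refine List.countP_mono_left fun v hv hvu => ?_
    rcases hWf v hv with hK | hS
    · exact absurd (by simpa using hvu) (hKu v hK)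
    · simpa using hS
  have hout : W.countP (· ∈ Nplus E f) ≤ W.countP (T u ·) + 1 := by
    refine (List.countP_le_countP_add_countP (r := fun v => s(v, u) = s(a, b))
      fun v _ hv => ?_).trans (Nat.add_le_add_left (hW.countP_mk_eq_le_one u _) _)
    have hvK : v ∈ Nplus E f := by simpa using hv
    have hvu : v ≠ u := by rintro rfl; exact hu (Or.inl hvK)
    by_cases hab : s(v, u) = s(a, b)
    · exact Or.inr (decide_eq_true hab)
    · exact Or.inl (decide_eq_true ((hC.total v u hvu hab).resolve_left (hKu v hvK)))
  exact hl.move (by have := hl.countP_le; omega)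

theorem IsGoodCompletion.countP_nplus_le_countP_nplusplus (hC : IsGoodCompletion E T a b)
    {p M : List V} (hl : IsMedianOrder T (p ++ M ++ [f])) (hnd : (p ++ M ++ [f]).Nodup) :
    M.countP (· ∈ Nplus E f) ≤ M.countP (· ∈ Nplusplus E f) := by
  induction hn : M.length using Nat.strong_induction_on generalizing p M with
  | _ n ih =>
  by_contra! hfail
  obtain ⟨u₀, hu₀M, hu₀⟩ := hC.exists_mem_not_mem_nplus_union hl hfail
  obtain ⟨u, hfind⟩ : ∃ u, M.find? (· ∉ Nplus E f ∪ Nplusplus E f) = some u := by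
    rw [← Option.isSome_iff_exists, List.find?_isSome]
    exact ⟨u₀, hu₀M, by simpa using hu₀⟩
  obtain ⟨hu, W, Z, rfl, hW⟩ := List.find?_eq_some_iff_append.mp hfind
  simp only [decide_eq_true_eq, Bool.not_eq_true', decide_eq_false_iff_not, not_not] at hu hW
  have hnd' : (p ++ W ++ u :: (Z ++ [f])).Nodup := by simpa using hnd
  have huf : u ≠ f := by rintro rfl; simp [List.nodup_append] at hnd'
  have hcount : W.countP (· ∈ Nplusplus E f) + Z.countP (· ∈ Nplusplus E f) <
      W.countP (· ∈ Nplus E f) + Z.countP (· ∈ Nplus E f) := by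
    simpa [(not_or.mp hu).1, (not_or.mp hu).2] using hfail
  have hZ := ih Z.length (by simp [← hn]; omega) (p := p ++ W ++ [u]) (M := Z)
    (by simpa using hl) (by simpa using hnd) rfl
  have hmoved := hC.isMedianOrder_move (by simpa using hl)
    (hnd'.sublist ((List.sublist_append_right p W).trans (List.sublist_append_left _ _))) hu huf hW
    (by omega)
  have hWZ := ih (W ++ Z).length (by simp [← hn]) (p := p ++ [u]) (M := W ++ Z)
    (by simpa using hmoved)
    (by simpa using (List.perm_append_cons_append p W (Z ++ [f]) u).nodup_iff.mpr hnd') rfl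
  simp only [List.countP_append] at hWZ
  omega

theorem IsGoodCompletion.hasSNP_of_isMedianOrder (hC : IsGoodCompletion E T a b) {p : List V}
    (hl : IsMedianOrder T (p ++ [f])) (hnd : (p ++ [f]).Nodup) (hall : ∀ v, v ∈ p ++ [f]) :
    HasSNP E f := by
  have h := hC.countP_nplus_le_countP_nplusplus (p := []) (M := p) (by simpa using hl)
    (by simpa using hnd)
  rw [HasSNP, ← List.countP_eq_ncard hnd hall, ← List.countP_eq_ncard hnd hall]
  simpa [Nplus, Nplusplus, hC.irrefl f] using h

end GoodCompletion

theorem exists_hasSNP_of_forall_good {V : Type*} [Finite V] {E : V → V → Prop}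
    (hasym : ∀ x y, E x y → ¬ E y x) (a b : V)
    (hgood : ∀ x y, IsMissingEdge E x y → s(x, y) ≠ s(a, b) → Good E x y) :
    ∃ v, HasSNP E v := by
  have := Fintype.ofFinite V
  obtain ⟨l, hperm, hl⟩ := exists_perm_isMedianOrder
    (fun x y => E x y ∨ (IsMissingEdge E x y ∧ IsGoodOrientation E x y)) Finset.univ.toList
  have hall : ∀ v, v ∈ l := fun v => hperm.mem_iff.mpr (by simp)
  obtain ⟨p, f, rfl⟩ := (List.eq_nil_or_concat l).resolve_left (List.ne_nil_of_mem (hall a))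
  rw [List.concat_eq_append] at *
  exact ⟨f, (isGoodCompletion_of_forall_good hasym hgood).hasSNP_of_isMedianOrder hl
    (hperm.nodup_iff.mpr (Finset.nodup_toList _)) hall⟩

section P3

variable {V : Type*} {E : V → V → Prop} {a b c d : V}

theorem good_middle_of_missing_P3
    (hpath : ∀ u v, IsMissingEdge E u v →
      s(u, v) = s(a, b) ∨ s(u, v) = s(b, c) ∨ s(u, v) = s(c, d)) :
    Good E b c := by
  by_contra h
  obtain ⟨v, w, hm, -, -, hvb, hvc, hwb, hwc⟩ := exists_isMissingEdge_of_not_good h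
  rcases hpath v w hm with h | h | h <;> simp only [Sym2.eq_iff] at h <;> tauto

theorem good_or_good_of_missing_P3
    (hpath : ∀ u v, IsMissingEdge E u v →
      s(u, v) = s(a, b) ∨ s(u, v) = s(b, c) ∨ s(u, v) = s(c, d))
    (hasym : ∀ x y, E x y → ¬ E y x) (hbc : IsMissingEdge E b c) :
    Good E a b ∨ Good E c d := by
  by_contra! h
  obtain ⟨v, w, hm, hvE, hwE, hva, hvb, hwa, hwb⟩ := exists_isMissingEdge_of_not_good h.1
  obtain ⟨v', w', hm', hv'E, hw'E, hv'c, hv'd, hw'c, hw'd⟩ := exists_isMissingEdge_of_not_good h.2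
  have hca : E c a := by
    rcases hpath v w hm with h | h | h <;> grind [Sym2.eq_iff, IsMissingEdge]
  have hac : E a c := by
    rcases hpath v' w' hm' with h | h | h <;> grind [Sym2.eq_iff, IsMissingEdge]
  exact hasym a c hac hca

end P3

/-- every finite digraph whose missing graph is a path with 3
edges has a vertex with the second neighborhood property. -/
theorem snp_of_missing_P3 {V : Type*} [Fintype V]
    (E : V → V → Prop)
    (hasym : ∀ x y : V, E x y → ¬ E y x)
    (hP3 : ∃ a b c d : V, [a, b, c, d].Pairwise (· ≠ ·) ∧
      ∀ u v : V, IsMissingEdge E u v ↔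
        s(u, v) ∈ ({s(a, b), s(b, c), s(c, d)} : Set (Sym2 V))) :
    ∃ v : V, HasSNP E v := by
  obtain ⟨a, b, c, d, -, hmiss⟩ := hP3
  have hpath : ∀ u v, IsMissingEdge E u v →
      s(u, v) = s(a, b) ∨ s(u, v) = s(b, c) ∨ s(u, v) = s(c, d) :=
    fun u v h => by simpa using (hmiss u v).mp h
  have hbc : Good E b c := good_middle_of_missing_P3 hpath
  rcases good_or_good_of_missing_P3 hpath hasym ((hmiss b c).mpr (by simp)) with hab | hcd
  · refine exists_hasSNP_of_forall_good hasym c d fun x y hm hne => ?_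
    rcases hpath x y hm with h | h | h
    exacts [good_of_mk_eq h hab, good_of_mk_eq h hbc, absurd h hne]
  · refine exists_hasSNP_of_forall_good hasym a b fun x y hm hne => ?_
    rcases hpath x y hm with h | h | h
    exacts [absurd h hne, good_of_mk_eq h hbc, good_of_mk_eq h hcd]
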